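/- Let a ∈ ℝ, 0 ≤ R ≤ 1, and let K_{a,R} = h + conj(g) be the generalized harmonic Koebe function. Then h + g = k_{a+R} on 𝔻. Equivalently (symmetry property (i)), K_H(1, a, 1, R) = K_H(−1, a+R, 1, R). -/

import Mathlib

/-
With `w = (1 + z)/(1 - z)` we have `k_a' = w^(a-1)/(1-z)^2` and `l_R = (w^R - 1)/(w^R + 1)`.
Solving `h' - g' = k_a'`, `g' = l_R h'` gives `h' + g' = w^R (h' - g') = w^R k_a' = k_{a+R}'`,
which needs only `w^R ≠ -1`; this holds because `Re w > 0` and `|R| ≤ 1` keep `w^R` in the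
right half-plane. Both sides of `h + g = k_{a+R}` vanish at `0`, so they agree on the disk.
-/
open Complex Set

noncomputable section

/-- The open unit disk in the complex plane. -/
def unitDisk : Set ℂ := {z : ℂ | ‖z‖ < 1}

/-- The generalized Koebe function `k_a`, using the principal branch of the logarithm
(via the complex power function). -/
def koebeFn (a : ℂ) (z : ℂ) : ℂ :=
  if a = 0 then (1 / 2) * Complex.log ((1 + z) / (1 - z))
  else (1 / (2 * a)) * (((1 + z) / (1 - z)) ^ a - 1)

/-- The lens map `l_R` (with principal-branch powers); note that this formula also
gives `l_0 ≡ 0` and `l_1 = id` on the unit disk. -/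
def lensMap (R : ℝ) (z : ℂ) : ℂ :=
  (((1 + z) / (1 - z)) ^ (R : ℂ) - 1) / (((1 + z) / (1 - z)) ^ (R : ℂ) + 1)

/-- The `n`-th Taylor coefficient of `f` at `0`. -/
def coeffAt (f : ℂ → ℂ) (n : ℕ) : ℂ := iteratedDeriv n f 0 / n.factorial

lemma unitDisk_eq_ball : unitDisk = Metric.ball (0 : ℂ) 1 := by
  ext z; simp [unitDisk]

lemma isOpen_unitDisk : IsOpen unitDisk :=
  unitDisk_eq_ball ▸ Metric.isOpen_ball

lemma isPreconnected_unitDisk : IsPreconnected unitDisk :=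
  unitDisk_eq_ball ▸ (convex_ball (0 : ℂ) 1).isPreconnected

lemma zero_mem_unitDisk : (0 : ℂ) ∈ unitDisk := by
  simp [unitDisk]

lemma one_sub_ne_zero_of_mem_unitDisk {z : ℂ} (hz : z ∈ unitDisk) : 1 - z ≠ 0 := by
  intro hz1
  rw [← eq_of_sub_eq_zero hz1] at hz
  simp [unitDisk] at hz

lemma re_one_add_div_one_sub_pos {z : ℂ} (hz : z ∈ unitDisk) : 0 < ((1 + z) / (1 - z)).re := by
  have hnormSq : normSq z < 1 := by
    rw [← Complex.sq_norm]
    exact pow_lt_one₀ (norm_nonneg z) hz two_ne_zero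
  have hnum : (1 + z).re * (1 - z).re + (1 + z).im * (1 - z).im = 1 - normSq z := by
    simp [normSq_apply]; ring
  rw [div_re, ← add_div, hnum]
  exact div_pos (by linarith) (normSq_pos.2 (one_sub_ne_zero_of_mem_unitDisk hz))

lemma one_add_div_one_sub_mem_slitPlane {z : ℂ} (hz : z ∈ unitDisk) :
    (1 + z) / (1 - z) ∈ slitPlane :=
  Or.inl (re_one_add_div_one_sub_pos hz)

lemma hasDerivAt_one_add_div_one_sub {z : ℂ} (hz : 1 - z ≠ 0) :
    HasDerivAt (fun z : ℂ => (1 + z) / (1 - z)) (2 / (1 - z) ^ 2) z := by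
  refine (((hasDerivAt_id' z).const_add 1).fun_div ((hasDerivAt_id' z).const_sub 1) hz
    ).congr_deriv ?_
  ring

lemma hasDerivAt_koebeFn (a : ℂ) {z : ℂ} (hz : z ∈ unitDisk) :
    HasDerivAt (koebeFn a) (((1 + z) / (1 - z)) ^ (a - 1) / (1 - z) ^ 2) z := by
  have hz1 := one_sub_ne_zero_of_mem_unitDisk hz
  have hw := hasDerivAt_one_add_div_one_sub hz1
  have hslit := one_add_div_one_sub_mem_slitPlane hz
  by_cases ha : a = 0
  · have hk : koebeFn a = fun x => 1 / 2 * log ((1 + x) / (1 - x)) := by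
      funext x; simp [koebeFn, ha]
    rw [hk, ha, zero_sub, cpow_neg_one]
    refine (((hasDerivAt_log hslit).comp z hw).const_mul (1 / 2 : ℂ)).congr_deriv ?_
    field_simp
  · have hk : koebeFn a = fun x => 1 / (2 * a) * (((1 + x) / (1 - x)) ^ a - 1) := by
      funext x; simp [koebeFn, ha]
    rw [hk]
    refine (((hw.cpow_const hslit).sub_const 1).const_mul (1 / (2 * a))).congr_deriv ?_
    field_simp

lemma differentiableOn_koebeFn (a : ℂ) : DifferentiableOn ℂ (koebeFn a) unitDisk :=
  fun _ hz => (hasDerivAt_koebeFn a hz).differentiableAt.differentiableWithinAt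

lemma koebeFn_apply_zero (a : ℂ) : koebeFn a 0 = 0 := by
  by_cases ha : a = 0 <;> simp [koebeFn, ha]

lemma re_cpow_ofReal_pos {w : ℂ} (hw : 0 < w.re) {R : ℝ} (hR : |R| ≤ 1) :
    0 < (w ^ (R : ℂ)).re := by
  have hw0 : w ≠ 0 := fun h => by simp [h] at hw
  have harg : |R * w.arg| < Real.pi / 2 := by
    rw [abs_mul]
    calc |R| * |w.arg| ≤ |w.arg| := mul_le_of_le_one_left (abs_nonneg _) hR
      _ < Real.pi / 2 := abs_arg_lt_pi_div_two_iff.2 (Or.inl hw)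
  rw [cpow_def_of_ne_zero hw0, exp_re]
  have him : (log w * R).im = R * w.arg := by simp [log_im, mul_comm]
  rw [him]
  exact mul_pos (Real.exp_pos _) (Real.cos_pos_of_mem_Ioo (abs_lt.1 harg))

lemma add_eq_mul_of_sub_eq_of_eq_div_mul {u x y K : ℂ} (hu : u + 1 ≠ 0)
    (hsub : x - y = K) (hy : y = (u - 1) / (u + 1) * x) : x + y = u * K := by
  subst hsub hy
  field_simp
  ring

lemma deriv_add_eq_deriv_koebeFn (a : ℂ) {R : ℝ} (hR : |R| ≤ 1) {h g : ℂ → ℂ}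
    (hh : DifferentiableOn ℂ h unitDisk) (hg : DifferentiableOn ℂ g unitDisk)
    (hshear : ∀ z ∈ unitDisk, h z - g z = koebeFn a z)
    (hdil : ∀ z ∈ unitDisk, deriv g z = lensMap R z * deriv h z)
    {z : ℂ} (hz : z ∈ unitDisk) :
    deriv (h + g) z = deriv (koebeFn (a + R)) z := by
  set w := (1 + z) / (1 - z)
  have hnhds : unitDisk ∈ nhds z := isOpen_unitDisk.mem_nhds hz
  have hhz := hh.differentiableAt hnhds
  have hgz := hg.differentiableAt hnhds
  have hsub : deriv h z - deriv g z = w ^ (a - 1) / (1 - z) ^ 2 := by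
    have hev : h - g =ᶠ[nhds z] koebeFn a := Filter.eventuallyEq_of_mem hnhds hshear
    rw [← deriv_sub hhz hgz, hev.deriv_eq, (hasDerivAt_koebeFn a hz).deriv]
  have hwR : w ^ (R : ℂ) + 1 ≠ 0 := by
    intro hzero
    have hre := re_cpow_ofReal_pos (re_one_add_div_one_sub_pos hz) hR
    rw [eq_neg_of_add_eq_zero_left hzero] at hre
    norm_num at hre
  have hpow : w ^ (a + R - 1) = w ^ (R : ℂ) * w ^ (a - 1) := by
    rw [← cpow_add _ _ (slitPlane_ne_zero (one_add_div_one_sub_mem_slitPlane hz))]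
    congr 1
    ring
  rw [deriv_add hhz hgz, (hasDerivAt_koebeFn _ hz).deriv, hpow, mul_div_assoc]
  exact add_eq_mul_of_sub_eq_of_eq_div_mul hwR hsub (hdil z hz)

/-- For real `a` and `0 ≤ R ≤ 1`, the generalized harmonic Koebe function
`K_{a,R} = h + conj g` (defined by the shear system `h - g = k_a`, `g' = l_R · h'`,
`h(0) = g(0) = 0`) satisfies `h + g = k_{a+R}` on the unit disk; equivalently,
`K_H(1, a, 1, R) = K_H(-1, a+R, 1, R)`. -/
theorem generalized_harmonic_koebe_sum_parts (a R : ℝ) (hR0 : 0 ≤ R) (hR1 : R ≤ 1)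
    (h g : ℂ → ℂ)
    (hh : DifferentiableOn ℂ h unitDisk) (hg : DifferentiableOn ℂ g unitDisk)
    (h0 : h 0 = 0) (g0 : g 0 = 0)
    (hshear : ∀ z ∈ unitDisk, h z - g z = koebeFn (a : ℂ) z)
    (hdil : ∀ z ∈ unitDisk, deriv g z = lensMap R z * deriv h z) :
    ∀ z ∈ unitDisk, h z + g z = koebeFn ((a : ℂ) + (R : ℂ)) z := by
  have hR : |R| ≤ 1 := abs_le.2 ⟨by linarith, hR1⟩
  exact isOpen_unitDisk.eqOn_of_deriv_eq isPreconnected_unitDisk (hh.add hg)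
    (differentiableOn_koebeFn _) (fun z hz => deriv_add_eq_deriv_koebeFn a hR hh hg hshear hdil hz)
    zero_mem_unitDisk (by simp [h0, g0, koebeFn_apply_zero])
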